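/- arXiv:2104.00927 — 7 statements merged into one kernel-verified Lean document; each statement's English description precedes it below -/
import Mathlib

section
/- Let S ⊆ V be an independent set of H = (V,E) with |S| = k, let 𝓗 be a real inner product space, and let x be a feasible SDP solution for H in 𝓗 such that (i) Σ_{I ∈ C(V,r)} ‖x'_I‖² ≤ Σ_{I ∈ C(V,r)} ‖x_I‖² for every feasible SDP solution x' for H in 𝓗, and (ii) there exists a unit vector ê ∈ 𝓗 with ⟨ê, x_I⟩ = 0 for every nonempty I ⊆ V∖S with |I| ≤ r+1. Then Σ_{I ∈ C(S,r)} ‖x_I‖² + Σ_{I ∈ ∂(S)} ‖x_I‖² ≥ C(k,r), where C(T,r) denotes the set of r-element subsets of T, C(k,r) the binomial coefficient, and ∂(S) the set of r-element subsets of V intersecting both S and V∖S. -/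
open Finset
open scoped RealInnerProductSpace Classical
/-- Feasibility of a solution for the crude SDP for an `r`-uniform hypergraph `(V, E)`. -/
def SDPFeasible {V : Type} [DecidableEq V]
    {H : Type} [NormedAddCommGroup H] [InnerProductSpace ℝ H]
    (r : ℕ) (E : Finset (Finset V)) (x : Finset V → H) : Prop :=
  (∀ i : V, ‖x {i}‖ ^ 2 = (1 : ℝ)) ∧
  (∀ e ∈ E, ‖x e‖ ^ 2 = (0 : ℝ)) ∧
  (∀ I J : Finset V, I.Nonempty → J.Nonempty → (I ∪ J).card ≤ r + 1 →
    ⟪x I, x J⟫ = ‖x (I ∪ J)‖ ^ 2) ∧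
  (∀ (u : V) (I J : Finset V), I.Nonempty → I ⊆ J → J.card ≤ r + 1 →
    ⟪x {u}, x J⟫ ≤ ⟪x {u}, x I⟫) ∧
  (∀ (u : V) (v : Fin r → V), Function.Injective v → (∀ i, v i ≠ u) →
    1 - ‖x (insert u (Finset.image v Finset.univ))‖ ^ 2 ≤
      ∑ i : Fin r, (1 - ‖x {u, v i}‖ ^ 2))
/-- The boundary `∂(S)`: `r`-element subsets of `V` meeting both `S` and `V \ S`. -/
def boundary {V : Type} [Fintype V] [DecidableEq V] (r : ℕ) (S : Finset V) :
    Finset (Finset V) :=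
  (Finset.univ.powersetCard r).filter fun I => (I ∩ S).Nonempty ∧ (I \ S).Nonempty

/-!
Let `c = collapse S ê x` be the family that equals `ê` on every subset of `S`, agrees with `x`
on the nonempty subsets of `V ∖ S`, and vanishes on the sets crossing `S`. It is again feasible:
no hyperedge lies inside the independent set `S`, and `ê` is orthogonal to every `x_I` with
`I ⊆ V ∖ S`, which makes the consistency constraints hold across the cut. By optimality of `x`,
the objective of `c` is at most that of `x`. The two objectives agree on the `r`-subsets of
`V ∖ S`; on the `r`-subsets of `S` the family `c` contributes exactly `C(k, r)`, and on `∂(S)`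
it contributes `0`.
-/

lemma Finset.Nonempty.not_subset_of_disjoint {α : Type*} {s t : Finset α} (hs : s.Nonempty)
    (hd : Disjoint s t) : ¬ s ⊆ t :=
  fun h => hs.ne_empty (hd.eq_bot_of_le h)

section

variable {V : Type} [DecidableEq V]

section boundary

variable [Fintype V]

lemma mem_boundary {r : ℕ} {S I : Finset V} :
    I ∈ boundary r S ↔ I.card = r ∧ ¬ I ⊆ S ∧ ¬ Disjoint I S := by
  simp [boundary, not_disjoint_iff_nonempty_inter, sdiff_nonempty, and_comm]

lemma sum_powersetCard_univ_eq {M : Type*} [AddCommMonoid M] (r : ℕ)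
    (S : Finset V) (f : Finset V → M) :
    ∑ I ∈ univ.powersetCard r, f I = ∑ I ∈ S.powersetCard r, f I + ∑ I ∈ boundary r S, f I +
      ∑ I ∈ univ.powersetCard r with ¬ I ⊆ S ∧ Disjoint I S, f I := by
  have hinside : {I ∈ (univ : Finset V).powersetCard r | I ⊆ S} = S.powersetCard r := by
    ext I
    simp [mem_powersetCard, and_comm]
  have hcross :
      {I ∈ (univ : Finset V).powersetCard r | ¬ I ⊆ S ∧ ¬ Disjoint I S} = boundary r S := by
    ext I
    simp only [mem_filter, mem_boundary, mem_powersetCard, subset_univ, true_and]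
  rw [← sum_filter_add_sum_filter_not _ (· ⊆ S), hinside, add_assoc,
    ← sum_filter_add_sum_filter_not (filter _ _) (fun I => ¬ Disjoint I S), filter_filter,
    filter_filter, hcross]
  simp only [not_not]

end boundary

variable {H : Type} {S I J : Finset V} {e : H} {x : Finset V → H}

section Zero

variable [Zero H]

def collapse (S : Finset V) (e : H) (x : Finset V → H) (I : Finset V) : H :=
  if I ⊆ S then e else if Disjoint I S then x I else 0

lemma collapse_of_subset (h : I ⊆ S) : collapse S e x I = e := if_pos h

lemma collapse_of_disjoint (hS : ¬ I ⊆ S) (hd : Disjoint I S) :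
    collapse S e x I = x I := by
  simp [collapse, hS, hd]

lemma collapse_of_not_disjoint (hS : ¬ I ⊆ S) (hd : ¬ Disjoint I S) :
    collapse S e x I = 0 := by
  simp [collapse, hS, hd]

end Zero

variable [NormedAddCommGroup H]

lemma sum_norm_collapse_powersetCard (he : ‖e‖ = 1) (r : ℕ) :
    ∑ I ∈ S.powersetCard r, ‖collapse S e x I‖ ^ 2 = (S.card.choose r : ℝ) := by
  rw [sum_congr rfl fun I hI => by rw [collapse_of_subset (mem_powersetCard.1 hI).1, he, one_pow],
    sum_const, card_powersetCard, nsmul_one]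

lemma sum_norm_collapse_boundary [Fintype V] (r : ℕ) :
    ∑ I ∈ boundary r S, ‖collapse S e x I‖ ^ 2 = 0 :=
  sum_eq_zero fun I hI => by
    obtain ⟨-, hS, hd⟩ := mem_boundary.1 hI
    rw [collapse_of_not_disjoint hS hd, norm_zero, zero_pow two_ne_zero]

lemma sum_norm_collapse_outside [Fintype V] (r : ℕ) :
    ∑ I ∈ univ.powersetCard r with ¬ I ⊆ S ∧ Disjoint I S, ‖collapse S e x I‖ ^ 2 =
      ∑ I ∈ univ.powersetCard r with ¬ I ⊆ S ∧ Disjoint I S, ‖x I‖ ^ 2 :=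
  sum_congr rfl fun I hI => by
    obtain ⟨-, hS, hd⟩ := mem_filter.1 hI
    rw [collapse_of_disjoint hS hd]

variable [InnerProductSpace ℝ H] {r : ℕ} {E : Finset (Finset V)}

lemma SDPFeasible.norm_sq_le_one (hx : SDPFeasible r E x) (hI : I.Nonempty)
    (hIc : I.card ≤ r + 1) : ‖x I‖ ^ 2 ≤ 1 := by
  obtain ⟨u, hu⟩ := hI
  have hunion : {u} ∪ I = I := by rw [← insert_eq, insert_eq_of_mem hu]
  have hinner := hx.2.2.1 {u} I (singleton_nonempty u) ⟨u, hu⟩ (by rwa [hunion])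
  have hanti := hx.2.2.2.1 u {u} I (singleton_nonempty u) (singleton_subset_iff.2 hu) hIc
  rwa [hinner, hunion, real_inner_self_eq_norm_sq, hx.1 u] at hanti

lemma SDPFeasible.inner_singleton_nonneg (hx : SDPFeasible r E x) (u : V) (hI : I.Nonempty)
    (hc : (insert u I).card ≤ r + 1) : 0 ≤ ⟪x {u}, x I⟫ := by
  rw [hx.2.2.1 {u} I (singleton_nonempty u) hI (by rwa [← insert_eq])]
  positivity

lemma inner_collapse_eq_zero
    (horth : ∀ I : Finset V, I.Nonempty → Disjoint I S → I.card ≤ r + 1 → ⟪e, x I⟫ = 0)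
    (hJ : ¬ J ⊆ S) (hJc : J.card ≤ r + 1) : ⟪e, collapse S e x J⟫ = 0 := by
  by_cases hd : Disjoint J S
  · rw [collapse_of_disjoint hJ hd]
    exact horth J ((sdiff_nonempty.2 hJ).mono sdiff_subset) hd hJc
  · rw [collapse_of_not_disjoint hJ hd, inner_zero_right]

lemma norm_collapse_sq_le_one (hx : SDPFeasible r E x) (he : ‖e‖ = 1) (hI : I.Nonempty)
    (hIc : I.card ≤ r + 1) : ‖collapse S e x I‖ ^ 2 ≤ 1 := by
  by_cases hS : I ⊆ S
  · rw [collapse_of_subset hS, he, one_pow]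
  by_cases hd : Disjoint I S
  · rw [collapse_of_disjoint hS hd]
    exact hx.norm_sq_le_one hI hIc
  · rw [collapse_of_not_disjoint hS hd]
    simp

lemma norm_collapse_singleton (hx : SDPFeasible r E x) (he : ‖e‖ = 1) (u : V) :
    ‖collapse S e x {u}‖ ^ 2 = 1 := by
  by_cases hu : u ∈ S
  · rw [collapse_of_subset (singleton_subset_iff.2 hu), he, one_pow]
  · rw [collapse_of_disjoint (by simpa using hu) (disjoint_singleton_left.2 hu)]
    exact hx.1 u

lemma norm_collapse_edge (hx : SDPFeasible r E x) (hSind : ∀ f ∈ E, ¬ f ⊆ S) {f : Finset V}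
    (hf : f ∈ E) : ‖collapse S e x f‖ ^ 2 = 0 := by
  by_cases hd : Disjoint f S
  · rw [collapse_of_disjoint (hSind f hf) hd]
    exact hx.2.1 f hf
  · rw [collapse_of_not_disjoint (hSind f hf) hd]
    simp

lemma inner_collapse (hx : SDPFeasible r E x)
    (horth : ∀ I : Finset V, I.Nonempty → Disjoint I S → I.card ≤ r + 1 → ⟪e, x I⟫ = 0)
    (hI : I.Nonempty) (hJ : J.Nonempty) (hc : (I ∪ J).card ≤ r + 1) :
    ⟪collapse S e x I, collapse S e x J⟫ = ‖collapse S e x (I ∪ J)‖ ^ 2 := by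
  have hIc : I.card ≤ r + 1 := (card_le_card subset_union_left).trans hc
  have hJc : J.card ≤ r + 1 := (card_le_card subset_union_right).trans hc
  by_cases hU : I ∪ J ⊆ S
  · obtain ⟨hIS, hJS⟩ := union_subset_iff.1 hU
    rw [collapse_of_subset hIS, collapse_of_subset hJS, collapse_of_subset hU,
      real_inner_self_eq_norm_sq]
  by_cases hUd : Disjoint (I ∪ J) S
  · obtain ⟨hId, hJd⟩ := disjoint_union_left.1 hUd
    rw [collapse_of_disjoint hU hUd, collapse_of_disjoint (hI.not_subset_of_disjoint hId) hId,
      collapse_of_disjoint (hJ.not_subset_of_disjoint hJd) hJd]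
    exact hx.2.2.1 I J hI hJ hc
  rw [collapse_of_not_disjoint hU hUd, norm_zero, zero_pow two_ne_zero]
  by_cases hIS : I ⊆ S
  · rw [collapse_of_subset hIS]
    exact inner_collapse_eq_zero horth (fun hJS => hU (union_subset hIS hJS)) hJc
  by_cases hJS : J ⊆ S
  · rw [collapse_of_subset hJS, real_inner_comm]
    exact inner_collapse_eq_zero horth (fun hIS => hU (union_subset hIS hJS)) hIc
  rcases not_and_or.1 (mt disjoint_union_left.2 hUd) with hId | hJd
  · rw [collapse_of_not_disjoint hIS hId, inner_zero_left]
  · rw [collapse_of_not_disjoint hJS hJd, inner_zero_right]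

lemma inner_singleton_collapse_anti (hx : SDPFeasible r E x) (he : ‖e‖ = 1)
    (horth : ∀ I : Finset V, I.Nonempty → Disjoint I S → I.card ≤ r + 1 → ⟪e, x I⟫ = 0)
    (u : V) (hI : I.Nonempty) (hIJ : I ⊆ J) (hJc : J.card ≤ r + 1) :
    ⟪collapse S e x {u}, collapse S e x J⟫ ≤ ⟪collapse S e x {u}, collapse S e x I⟫ := by
  have hIc : I.card ≤ r + 1 := (card_le_card hIJ).trans hJc
  by_cases hu : u ∈ S
  · rw [collapse_of_subset (singleton_subset_iff.2 hu)]
    by_cases hIS : I ⊆ S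
    · rw [collapse_of_subset hIS, real_inner_self_eq_norm_sq, he, one_pow]
      by_cases hJS : J ⊆ S
      · rw [collapse_of_subset hJS, real_inner_self_eq_norm_sq, he, one_pow]
      · rw [inner_collapse_eq_zero horth hJS hJc]
        exact zero_le_one
    · rw [inner_collapse_eq_zero horth hIS hIc,
        inner_collapse_eq_zero horth (fun hJS => hIS (hIJ.trans hJS)) hJc]
  have hud : Disjoint {u} S := disjoint_singleton_left.2 hu
  rw [collapse_of_disjoint ((singleton_nonempty u).not_subset_of_disjoint hud) hud]
  by_cases hJS : J ⊆ S
  · rw [collapse_of_subset hJS, collapse_of_subset (hIJ.trans hJS)]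
  by_cases hJd : Disjoint J S
  · have hId : Disjoint I S := hJd.mono_left hIJ
    rw [collapse_of_disjoint hJS hJd, collapse_of_disjoint (hI.not_subset_of_disjoint hId) hId]
    exact hx.2.2.2.1 u I J hI hIJ hJc
  rw [collapse_of_not_disjoint hJS hJd, inner_zero_right]
  by_cases hIS : I ⊆ S
  · rw [collapse_of_subset hIS, real_inner_comm,
      horth {u} (singleton_nonempty u) hud (by rw [card_singleton]; omega)]
  by_cases hId : Disjoint I S
  · rw [collapse_of_disjoint hIS hId]
    -- `I` is a proper subset of the crossing set `J`, so `insert u I` still fits.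
    have hIJ' : I ⊂ J := hIJ.ssubset_of_ne (by rintro rfl; exact hJd hId)
    have hlt := card_lt_card hIJ'
    exact hx.inner_singleton_nonneg u hI ((card_insert_le u I).trans (by omega))
  · rw [collapse_of_not_disjoint hIS hId, inner_zero_right]

lemma exists_pair_not_subset_not_disjoint {u : V} {B : Finset V} (hS : ¬ insert u B ⊆ S)
    (hd : ¬ Disjoint (insert u B) S) : ∃ b ∈ B, ¬ {u, b} ⊆ S ∧ ¬ Disjoint {u, b} S := by
  by_cases hu : u ∈ S
  · obtain ⟨b, hbA, hbS⟩ := not_subset.1 hS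
    have hb : b ∈ B := (mem_insert.1 hbA).resolve_left (by rintro rfl; exact hbS hu)
    exact ⟨b, hb, fun h => hbS (h (by simp)), not_disjoint_iff.2 ⟨u, by simp, hu⟩⟩
  · obtain ⟨a, haA, haS⟩ := not_disjoint_iff.1 hd
    have ha : a ∈ B := (mem_insert.1 haA).resolve_left (by rintro rfl; exact hu haS)
    exact ⟨a, ha, fun h => hu (h (by simp)), not_disjoint_iff.2 ⟨a, by simp, haS⟩⟩

lemma one_sub_norm_collapse_le_sum (hx : SDPFeasible r E x) (he : ‖e‖ = 1) (u : V)
    (v : Fin r → V) (hv : Function.Injective v) (hvu : ∀ i, v i ≠ u) :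
    1 - ‖collapse S e x (insert u (image v univ))‖ ^ 2 ≤
      ∑ i : Fin r, (1 - ‖collapse S e x {u, v i}‖ ^ 2) := by
  set A := insert u (image v univ)
  have hterm : ∀ i, 0 ≤ 1 - ‖collapse S e x {u, v i}‖ ^ 2 := fun i =>
    sub_nonneg.2 (norm_collapse_sq_le_one hx he (insert_nonempty _ _)
      (card_le_two.trans (by have := i.pos; omega)))
  have hpair : ∀ i, {u, v i} ⊆ A := fun i =>
    insert_subset_insert u (singleton_subset_iff.2 (mem_image_of_mem v (mem_univ i)))
  by_cases hAS : A ⊆ S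
  · rw [collapse_of_subset hAS, he, one_pow, sub_self]
    exact sum_nonneg fun i _ => hterm i
  by_cases hAd : Disjoint A S
  · have hpd : ∀ i, Disjoint {u, v i} S := fun i => hAd.mono_left (hpair i)
    calc 1 - ‖collapse S e x A‖ ^ 2 = 1 - ‖x A‖ ^ 2 := by rw [collapse_of_disjoint hAS hAd]
      _ ≤ ∑ i : Fin r, (1 - ‖x {u, v i}‖ ^ 2) := hx.2.2.2.2 u v hv hvu
      _ = ∑ i : Fin r, (1 - ‖collapse S e x {u, v i}‖ ^ 2) := sum_congr rfl fun i _ => by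
        rw [collapse_of_disjoint ((insert_nonempty _ _).not_subset_of_disjoint (hpd i)) (hpd i)]
  obtain ⟨b, hb, hbS, hbd⟩ := exists_pair_not_subset_not_disjoint hAS hAd
  obtain ⟨i, -, rfl⟩ := mem_image.1 hb
  calc 1 - ‖collapse S e x A‖ ^ 2 = 1 - ‖collapse S e x {u, v i}‖ ^ 2 := by
        rw [collapse_of_not_disjoint hAS hAd, collapse_of_not_disjoint hbS hbd]
    _ ≤ ∑ j : Fin r, (1 - ‖collapse S e x {u, v j}‖ ^ 2) :=
        single_le_sum (fun j _ => hterm j) (mem_univ i)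

lemma SDPFeasible.collapse (hx : SDPFeasible r E x) (hSind : ∀ f ∈ E, ¬ f ⊆ S) (he : ‖e‖ = 1)
    (horth : ∀ I : Finset V, I.Nonempty → Disjoint I S → I.card ≤ r + 1 → ⟪e, x I⟫ = 0) :
    SDPFeasible r E (collapse S e x) :=
  ⟨norm_collapse_singleton hx he, fun _ hf => norm_collapse_edge hx hSind hf,
    fun _ _ hI hJ hc => inner_collapse hx horth hI hJ hc,
    fun u _ _ hI hIJ hJc => inner_singleton_collapse_anti hx he horth u hI hIJ hJc,
    one_sub_norm_collapse_le_sum hx he⟩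

end

theorem stmt_2_general {V : Type} [Fintype V] [DecidableEq V]
    {H : Type} [NormedAddCommGroup H] [InnerProductSpace ℝ H]
    (r k : ℕ)
    (E : Finset (Finset V))
    (S : Finset V) (hScard : S.card = k) (hSind : ∀ e ∈ E, ¬ e ⊆ S)
    (x : Finset V → H) (hx : SDPFeasible r E x)
    (hopt : ∀ x' : Finset V → H, SDPFeasible r E x' →
      ∑ I ∈ Finset.univ.powersetCard r, ‖x' I‖ ^ 2 ≤
        ∑ I ∈ Finset.univ.powersetCard r, ‖x I‖ ^ 2)
    (hehat : ∃ ehat : H, ‖ehat‖ = 1 ∧ ∀ I : Finset V, I.Nonempty → I ⊆ Sᶜ →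
      I.card ≤ r + 1 → ⟪ehat, x I⟫ = 0) :
    (k.choose r : ℝ) ≤
      ∑ I ∈ S.powersetCard r, ‖x I‖ ^ 2 + ∑ I ∈ boundary r S, ‖x I‖ ^ 2 := by
  obtain ⟨e, he, horth⟩ := hehat
  have hfeas : SDPFeasible r E (collapse S e x) :=
    hx.collapse hSind he fun I hI hd hc => horth I hI (subset_compl_iff_disjoint_right.2 hd) hc
  have hle := hopt _ hfeas
  rw [sum_powersetCard_univ_eq r S, sum_powersetCard_univ_eq r S,
    sum_norm_collapse_powersetCard he, sum_norm_collapse_boundary, sum_norm_collapse_outside,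
    hScard] at hle
  linarith

theorem stmt_2 {V : Type} [Fintype V] [DecidableEq V]
    {H : Type} [NormedAddCommGroup H] [InnerProductSpace ℝ H]
    (r k : ℕ) (hr : 2 ≤ r)
    (E : Finset (Finset V)) (hE : ∀ e ∈ E, e.card = r)
    (S : Finset V) (hScard : S.card = k) (hSind : ∀ e ∈ E, ¬ e ⊆ S)
    (x : Finset V → H) (hx : SDPFeasible r E x)
    (hopt : ∀ x' : Finset V → H, SDPFeasible r E x' →
      ∑ I ∈ Finset.univ.powersetCard r, ‖x' I‖ ^ 2 ≤
        ∑ I ∈ Finset.univ.powersetCard r, ‖x I‖ ^ 2)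
    (hehat : ∃ ehat : H, ‖ehat‖ = 1 ∧ ∀ I : Finset V, I.Nonempty → I ⊆ Sᶜ →
      I.card ≤ r + 1 → ⟪ehat, x I⟫ = 0) :
    (k.choose r : ℝ) ≤
      ∑ I ∈ S.powersetCard r, ‖x I‖ ^ 2 + ∑ I ∈ boundary r S, ‖x I‖ ^ 2 :=
  stmt_2_general r k E S hScard hSind x hx hopt hehat
end

section
/- Let x be a feasible SDP solution for H = (V,E), let S ⊆ V with |S| = k ≥ r, and let ε ∈ (0,1). If Σ_{I ∈ C(S,r)} ‖x_I‖² ≥ (1 − ε/(2r))·C(k,r), then there exists a vertex u ∈ S such that the set B := {v ∈ V∖{u} : ⟨x_u, x_v⟩ ≥ 1 − 1/(2r)} is an independent set of H of cardinality at least (1 − ε)(k − 1). (This is the deterministic core of the algorithm that outputs an independent set of size (1−ε)·k in the semi-random model.) -/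
/-!
Write `d(u, v) = 1 - ⟪x_u, x_v⟫ ≥ 0`. For an `r`-set `I`, monotonicity gives
`‖x_I‖² ≤ ⟪x_u, x_v⟫` for all `u, v ∈ I`, so the mass condition bounds the sum of `d` over ordered
pairs inside `r`-subsets of `S`. Every pair of `S` lies in `C(k-2, r-2)` of them and
`r(r-1) C(k,r) = k(k-1) C(k-2,r-2)`, so the average of `d` over pairs of `S` is at most `ε/(2r)`.
Some `u ∈ S` is therefore at average distance `≤ ε/(2r)` from the rest of `S`, and by Markov at most
`ε(k-1)` of them are farther than `1/(2r)`. Independence of `B` comes from the local constraint (5):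
for an edge `e ⊆ B` we have `x_{e ∪ {u}} = 0`, so `1 ≤ ∑_{v ∈ e} d(u, v) ≤ r/(2r)`.
-/

open Finset
open scoped RealInnerProductSpace Classical
namespace Finset

variable {α : Type*} [DecidableEq α]

theorem sum_powersetCard_sum_offDiag {M : Type*} [AddCommMonoid M] (S : Finset α) {r : ℕ}
    (hr : 2 ≤ r) (f : α × α → M) :
    ∑ I ∈ S.powersetCard r, ∑ p ∈ I.offDiag, f p =
      (#S - 2).choose (r - 2) • ∑ p ∈ S.offDiag, f p := by
  rw [sum_comm' (t' := S.offDiag) (s' := fun p => (S.powersetCard r).filter ({p.1, p.2} ⊆ ·))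
    (fun I p => by
      simp only [mem_powersetCard, mem_offDiag, mem_filter, insert_subset_iff,
        singleton_subset_iff]
      grind), smul_sum]
  refine sum_congr rfl fun p hp => ?_
  obtain ⟨h1, h2, hne⟩ := mem_offDiag.1 hp
  have hpair : #({p.1, p.2} : Finset α) = 2 := card_pair hne
  rw [sum_const, card_filter_powersetCard_subset _ _ _ (by simp [insert_subset_iff, h1, h2])
    (by omega), hpair]

theorem sum_offDiag_eq_sum_sum_erase {M : Type*} [AddCommMonoid M] (S : Finset α)
    (f : α × α → M) :
    ∑ p ∈ S.offDiag, f p = ∑ u ∈ S, ∑ v ∈ S.erase u, f (u, v) :=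
  sum_finset_product _ _ _ fun p => by
    simp only [mem_offDiag, mem_erase]
    tauto

theorem mul_card_filter_le_sum {ι R : Type*} [Semiring R] [PartialOrder R] [IsOrderedRing R]
    {s : Finset ι} {f : ι → R} (hf : ∀ i ∈ s, 0 ≤ f i) (t : R) :
    t * #(s.filter (t ≤ f ·)) ≤ ∑ i ∈ s, f i := by
  calc t * #(s.filter (t ≤ f ·)) = #(s.filter (t ≤ f ·)) • t := by
        rw [nsmul_eq_mul, Nat.cast_comm]
    _ ≤ ∑ i ∈ s.filter (t ≤ f ·), f i := card_nsmul_le_sum _ _ _ fun i hi => (mem_filter.1 hi).2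
    _ ≤ ∑ i ∈ s, f i := sum_le_sum_of_subset_of_nonneg (filter_subset _ _)
        fun i hi _ => hf i hi

end Finset

theorem Nat.cast_mul_pred_mul_choose {K : Type*} [Field K] [CharZero K] (k r : ℕ) (hr : 2 ≤ r) :
    ((r : K) * (r - 1)) * k.choose r = ((k : K) * (k - 1)) * (k - 2).choose (r - 2) := by
  have h : ((k.choose r * r.choose 2 : ℕ) : K) = (k.choose 2 * (k - 2).choose (r - 2) : ℕ) := by
    rw [Nat.choose_mul hr]
  push_cast [Nat.cast_choose_two] at h
  linear_combination 2 * h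

namespace SDPFeasible

variable {V : Type} [DecidableEq V] {H : Type} [NormedAddCommGroup H] [InnerProductSpace ℝ H]
  {r : ℕ} {E : Finset (Finset V)} {x : Finset V → H}

theorem norm_singleton (hx : SDPFeasible r E x) (u : V) : ‖x {u}‖ = 1 :=
  (pow_eq_one_iff_of_nonneg (norm_nonneg _) two_ne_zero).1 (hx.1 u)

theorem inner_singleton_le_one (hx : SDPFeasible r E x) (u v : V) : ⟪x {u}, x {v}⟫ ≤ 1 :=
  (real_inner_le_norm _ _).trans_eq (by rw [hx.norm_singleton, hx.norm_singleton, one_mul])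

theorem inner_singleton_eq_norm_sq (hx : SDPFeasible r E x) {u : V} {I : Finset V} (hu : u ∈ I)
    (hI : #I ≤ r + 1) : ⟪x {u}, x I⟫ = ‖x I‖ ^ 2 := by
  have hunion : {u} ∪ I = I := union_eq_right.2 (singleton_subset_iff.2 hu)
  simpa only [hunion] using hx.2.2.1 {u} I (singleton_nonempty u) ⟨u, hu⟩ (by rwa [hunion])

theorem inner_singleton_singleton (hx : SDPFeasible r E x) (hr : 1 ≤ r) (u v : V) :
    ⟪x {u}, x {v}⟫ = ‖x {u, v}‖ ^ 2 := by
  rw [insert_eq]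
  exact hx.2.2.1 {u} {v} (singleton_nonempty u) (singleton_nonempty v)
    ((card_union_le _ _).trans (by simp; omega))

theorem norm_sq_le_inner_singleton (hx : SDPFeasible r E x) (hr : 1 ≤ r) {I : Finset V}
    (hI : #I ≤ r + 1) {u v : V} (hu : u ∈ I) (hv : v ∈ I) : ‖x I‖ ^ 2 ≤ ⟪x {u}, x {v}⟫ := by
  have hpair : #({u, v} : Finset V) ≤ r + 1 := (card_le_two).trans (by omega)
  calc ‖x I‖ ^ 2 = ⟪x {u}, x I⟫ := (hx.inner_singleton_eq_norm_sq hu hI).symm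
    _ ≤ ⟪x {u}, x {u, v}⟫ :=
        hx.2.2.2.1 u {u, v} I (insert_nonempty _ _) (insert_subset_iff.2 ⟨hu, by simpa⟩) hI
    _ = ⟪x {u}, x {v}⟫ := by
        rw [hx.inner_singleton_eq_norm_sq (mem_insert_self u _) hpair,
          hx.inner_singleton_singleton hr]

theorem one_sub_norm_sq_insert_le (hx : SDPFeasible r E x) {u : V} {e : Finset V}
    (he : #e = r) (hue : u ∉ e) :
    1 - ‖x (insert u e)‖ ^ 2 ≤ ∑ v ∈ e, (1 - ‖x {u, v}‖ ^ 2) := by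
  let σ : Fin r ≃ e := (Fintype.equivFinOfCardEq (by rw [Fintype.card_coe, he])).symm
  have himage : univ.image (fun i => (σ i : V)) = e := by
    ext a
    simp only [mem_image, mem_univ, true_and]
    exact ⟨fun ⟨i, hi⟩ => hi ▸ (σ i).2, fun ha => ⟨σ.symm ⟨a, ha⟩, by simp⟩⟩
  have h := hx.2.2.2.2 u (fun i => σ i) (Subtype.val_injective.comp σ.injective)
    fun i hi => hue (hi ▸ (σ i).2)
  rwa [himage, σ.sum_comp (fun v : e => 1 - ‖x {u, (v : V)}‖ ^ 2),
    sum_coe_sort e (fun v => 1 - ‖x {u, v}‖ ^ 2)] at h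

theorem norm_sq_insert_edge (hx : SDPFeasible r E x) {e : Finset V} (he : e ∈ E)
    (hne : e.Nonempty) {u : V} (hI : #(insert u e) ≤ r + 1) : ‖x (insert u e)‖ ^ 2 = 0 := by
  have hxe : x e = 0 := by simpa using hx.2.1 e he
  rw [insert_eq, ← hx.2.2.1 {u} e (singleton_nonempty u) hne (by rwa [← insert_eq]), hxe,
    inner_zero_right]

theorem one_le_sum_one_sub_inner (hx : SDPFeasible r E x) (hr : 1 ≤ r) {e : Finset V}
    (he : e ∈ E) (hcard : #e = r) {u : V} (hue : u ∉ e) :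
    1 ≤ ∑ v ∈ e, (1 - ⟪x {u}, x {v}⟫) := by
  have hne : e.Nonempty := card_pos.1 (by omega)
  have h := hx.one_sub_norm_sq_insert_le hcard hue
  rw [hx.norm_sq_insert_edge he hne (by rw [card_insert_of_notMem hue, hcard])] at h
  simpa only [hx.inner_singleton_singleton hr, sub_zero] using h

theorem sum_offDiag_one_sub_inner_le (hx : SDPFeasible r E x) (hr : 1 ≤ r) {I : Finset V}
    (hI : #I = r) :
    ∑ p ∈ I.offDiag, (1 - ⟪x {p.1}, x {p.2}⟫) ≤ ((r : ℝ) * (r - 1)) * (1 - ‖x I‖ ^ 2) := by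
  have hcard : (#I.offDiag : ℝ) = r * (r - 1) := by
    rw [offDiag_card, hI, Nat.cast_sub (Nat.le_mul_self r)]
    push_cast
    ring
  rw [← hcard, ← nsmul_eq_mul]
  refine sum_le_card_nsmul _ _ _ fun p hp => ?_
  obtain ⟨h1, h2, -⟩ := mem_offDiag.1 hp
  linarith [hx.norm_sq_le_inner_singleton hr (by omega) h1 h2]

theorem sum_offDiag_one_sub_inner_le_of_mass (hx : SDPFeasible r E x) (hr : 2 ≤ r)
    {S : Finset V} (hrS : r ≤ #S) {δ : ℝ}
    (hmass : (1 - δ) * (#S).choose r ≤ ∑ I ∈ S.powersetCard r, ‖x I‖ ^ 2) :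
    ∑ p ∈ S.offDiag, (1 - ⟪x {p.1}, x {p.2}⟫) ≤ δ * (#S * (#S - 1)) := by
  have hc : (0 : ℝ) < (#S - 2).choose (r - 2) := by exact_mod_cast Nat.choose_pos (by omega)
  have hrr : (0 : ℝ) ≤ r * (r - 1) := by
    have : (2 : ℝ) ≤ r := by exact_mod_cast hr
    nlinarith
  refine le_of_mul_le_mul_left ?_ hc
  calc ((#S - 2).choose (r - 2) : ℝ) * ∑ p ∈ S.offDiag, (1 - ⟪x {p.1}, x {p.2}⟫)
      = ∑ I ∈ S.powersetCard r, ∑ p ∈ I.offDiag, (1 - ⟪x {p.1}, x {p.2}⟫) := by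
        rw [sum_powersetCard_sum_offDiag S hr, nsmul_eq_mul]
    _ ≤ ∑ I ∈ S.powersetCard r, ((r : ℝ) * (r - 1)) * (1 - ‖x I‖ ^ 2) :=
        sum_le_sum fun I hI =>
          hx.sum_offDiag_one_sub_inner_le (by omega) (mem_powersetCard.1 hI).2
    _ = ((r : ℝ) * (r - 1)) * ((#S).choose r - ∑ I ∈ S.powersetCard r, ‖x I‖ ^ 2) := by
        rw [← mul_sum, sum_sub_distrib, sum_const, card_powersetCard, nsmul_one]
    _ ≤ ((r : ℝ) * (r - 1)) * (δ * (#S).choose r) :=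
        mul_le_mul_of_nonneg_left (by linarith) hrr
    _ = (#S - 2).choose (r - 2) * (δ * (#S * (#S - 1))) := by
        linear_combination δ * Nat.cast_mul_pred_mul_choose (K := ℝ) (#S) r hr

theorem exists_mem_le_card_filter_near (hx : SDPFeasible r E x) (hr : 2 ≤ r)
    {S : Finset V} (hrS : r ≤ #S) {ε : ℝ}
    (hmass : (1 - ε / (2 * r)) * (#S).choose r ≤ ∑ I ∈ S.powersetCard r, ‖x I‖ ^ 2) :
    ∃ u ∈ S, (1 - ε) * (#S - 1 : ℝ) ≤
      #((S.erase u).filter fun v => 1 - 1 / (2 * r) ≤ ⟪x {u}, x {v}⟫) := by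
  have hr0 : (0 : ℝ) < 2 * r := by positivity
  have htotal := hx.sum_offDiag_one_sub_inner_le_of_mass hr hrS hmass
  rw [sum_offDiag_eq_sum_sum_erase] at htotal
  obtain ⟨u, huS, hu⟩ : ∃ u ∈ S,
      ∑ v ∈ S.erase u, (1 - ⟪x {u}, x {v}⟫) ≤ ε / (2 * r) * (#S - 1) := by
    refine exists_le_of_sum_le (card_pos.1 (by omega)) (htotal.trans_eq ?_)
    rw [sum_const, nsmul_eq_mul]
    ring
  refine ⟨u, huS, ?_⟩
  have hfar := mul_card_filter_le_sum (fun v _ => sub_nonneg.2 (hx.inner_singleton_le_one u v))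
    (1 / (2 * r)) |>.trans hu
  rw [div_mul_eq_mul_div, div_mul_eq_mul_div, div_le_div_iff_of_pos_right hr0, one_mul] at hfar
  have hbad : #((S.erase u).filter fun v => ¬ 1 - 1 / (2 * r) ≤ ⟪x {u}, x {v}⟫) ≤
      #((S.erase u).filter fun v => 1 / (2 * r) ≤ 1 - ⟪x {u}, x {v}⟫) :=
    card_le_card (monotone_filter_right _ fun v _ h => by linarith)
  have hsplit : (#((S.erase u).filter fun v => 1 - 1 / (2 * r) ≤ ⟪x {u}, x {v}⟫) : ℝ) +
      #((S.erase u).filter fun v => ¬ 1 - 1 / (2 * r) ≤ ⟪x {u}, x {v}⟫) = #S - 1 := by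
    rw [← Nat.cast_add, card_filter_add_card_filter_not, card_erase_of_mem huS,
      Nat.cast_sub (card_pos.2 ⟨u, huS⟩), Nat.cast_one]
  linarith [(Nat.cast_le (α := ℝ)).2 hbad]

theorem not_subset_filter_near [Fintype V] (hx : SDPFeasible r E x) (hr : 1 ≤ r)
    {e : Finset V} (he : e ∈ E) (hcard : #e = r) (u : V) :
    ¬ e ⊆ univ.filter fun v => v ≠ u ∧ 1 - 1 / (2 * r) ≤ ⟪x {u}, x {v}⟫ := by
  intro hsub
  have hnear (v : V) (hv : v ∈ e) : v ≠ u ∧ 1 - 1 / (2 * r) ≤ ⟪x {u}, x {v}⟫ :=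
    (mem_filter.1 (hsub hv)).2
  have hfar := hx.one_le_sum_one_sub_inner hr he hcard fun hu => (hnear u hu).1 rfl
  have hclose : ∑ v ∈ e, (1 - ⟪x {u}, x {v}⟫) ≤ #e • (1 / (2 * r) : ℝ) :=
    sum_le_card_nsmul _ _ _ fun v hv => by linarith [(hnear v hv).2]
  have hhalf : #e • (1 / (2 * r) : ℝ) = 1 / 2 := by
    rw [hcard, nsmul_eq_mul]
    field_simp
  linarith

end SDPFeasible

theorem stmt_3_general {V : Type} [Fintype V] [DecidableEq V]
    {H : Type} [NormedAddCommGroup H] [InnerProductSpace ℝ H]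
    (r k : ℕ) (hr : 2 ≤ r)
    (E : Finset (Finset V)) (hE : ∀ e ∈ E, e.card = r)
    (x : Finset V → H) (hx : SDPFeasible r E x)
    (S : Finset V) (hScard : S.card = k) (hkr : r ≤ k)
    (ε : ℝ)
    (hmass : (1 - ε / (2 * r)) * (k.choose r : ℝ) ≤
      ∑ I ∈ S.powersetCard r, ‖x I‖ ^ 2) :
    ∃ u ∈ S,
      (∀ e ∈ E,
        ¬ e ⊆ Finset.univ.filter (fun v => v ≠ u ∧ 1 - 1 / (2 * r) ≤ ⟪x {u}, x {v}⟫)) ∧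
      (1 - ε) * ((k : ℝ) - 1) ≤
        ((Finset.univ.filter
            (fun v => v ≠ u ∧ 1 - 1 / (2 * r) ≤ ⟪x {u}, x {v}⟫)).card : ℝ) := by
  subst hScard
  obtain ⟨u, huS, hu⟩ := hx.exists_mem_le_card_filter_near hr hkr hmass
  refine ⟨u, huS, fun e he => hx.not_subset_filter_near (by omega) he (hE e he) u, hu.trans ?_⟩
  refine Nat.cast_le.2 (card_le_card fun v hv => ?_)
  obtain ⟨hvS, hvu⟩ := mem_filter.1 hv
  exact mem_filter.2 ⟨mem_univ v, ne_of_mem_erase hvS, hvu⟩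

theorem stmt_3 {V : Type} [Fintype V] [DecidableEq V]
    {H : Type} [NormedAddCommGroup H] [InnerProductSpace ℝ H]
    (r k : ℕ) (hr : 2 ≤ r)
    (E : Finset (Finset V)) (hE : ∀ e ∈ E, e.card = r)
    (x : Finset V → H) (hx : SDPFeasible r E x)
    (S : Finset V) (hScard : S.card = k) (hkr : r ≤ k)
    (ε : ℝ) (hε0 : 0 < ε) (hε1 : ε < 1)
    (hmass : (1 - ε / (2 * r)) * (k.choose r : ℝ) ≤
      ∑ I ∈ S.powersetCard r, ‖x I‖ ^ 2) :
    ∃ u ∈ S,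
      (∀ e ∈ E,
        ¬ e ⊆ Finset.univ.filter (fun v => v ≠ u ∧ 1 - 1 / (2 * r) ≤ ⟪x {u}, x {v}⟫)) ∧
      (1 - ε) * ((k : ℝ) - 1) ≤
        ((Finset.univ.filter
            (fun v => v ≠ u ∧ 1 - 1 / (2 * r) ≤ ⟪x {u}, x {v}⟫)).card : ℝ) :=
  stmt_3_general r k hr E hE x hx S hScard hkr ε hmass
end

section
/- Let x be a feasible SDP solution for H = (V,E) and let S ⊆ V with |S| = k ≥ r. Then: (a) there exists u ∈ S such that (1/C(k−1,r−1))·Σ_{I ∈ C(S∖{u}, r−1)} ⟨x_u, x_I⟩ ≥ (1/C(k,r))·Σ_{I ∈ C(S,r)} ‖x_I‖²; and (b) there exists u ∈ S such that (1/(k−1))·Σ_{v ∈ S∖{u}} ⟨x_u, x_v⟩ ≥ (1/C(k,r))·Σ_{I ∈ C(S,r)} ‖x_I‖². Here C(T,i) denotes the set of i-element subsets of T and C(k,r), C(k−1,r−1) are binomial coefficients. -/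
open Finset
open scoped RealInnerProductSpace Classical
/-!
By consistency (3), `⟪x {u}, x I⟫ = ‖x (insert u I)‖ ^ 2` for `u ∉ I`, so summing the link sums
`∑ I ∈ C(S ∖ {u}, r - 1), ⟪x {u}, x I⟫` over `u ∈ S` counts every `r`-subset of `S` exactly `r`
times. Hence some `u` has link sum at least `r / k` times the total, which is (a) because
`k * C(k - 1, r - 1) = r * C(k, r)`. For the same `u`, monotonicity (4) gives
`(r - 1) ⟪x {u}, x I⟫ ≤ ∑ v ∈ I, ⟪x {u}, x {v}⟫`, and every `v ∈ S ∖ {u}` lies in `C(k - 2, r - 2)`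
of the sets `I`; since `(k - 1) * C(k - 2, r - 2) = (r - 1) * C(k - 1, r - 1)`, this gives (b).
-/

namespace Finset

variable {α β : Type*} [DecidableEq α] [AddCommMonoid β]

theorem sum_powersetCard_succ_sum_eq_sum_insert (T : Finset α) (m : ℕ) (g : α → Finset α → β) :
    ∑ I ∈ T.powersetCard (m + 1), ∑ v ∈ I, g v I =
      ∑ v ∈ T, ∑ I ∈ (T.erase v).powersetCard m, g v (insert v I) := by
  rw [sum_sigma', sum_sigma']
  refine sum_nbij' (fun p => ⟨p.2, p.1.erase p.2⟩) (fun p => ⟨insert p.1 p.2, p.1⟩)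
    ?_ ?_ ?_ ?_ ?_
  · rintro ⟨I, v⟩ hp
    simp only [mem_sigma, mem_powersetCard] at hp ⊢
    obtain ⟨⟨hIT, hIc⟩, hvI⟩ := hp
    exact ⟨hIT hvI, erase_subset_erase _ hIT, by rw [card_erase_of_mem hvI, hIc]; rfl⟩
  · rintro ⟨v, I⟩ hp
    simp only [mem_sigma, mem_powersetCard, subset_erase] at hp ⊢
    obtain ⟨hvT, ⟨hIT, hvI⟩, hIc⟩ := hp
    exact ⟨⟨insert_subset hvT hIT, by rw [card_insert_of_notMem hvI, hIc]⟩, mem_insert_self _ _⟩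
  · rintro ⟨I, v⟩ hp
    simp [insert_erase (mem_sigma.mp hp).2]
  · rintro ⟨v, I⟩ hp
    simp only [mem_sigma, mem_powersetCard, subset_erase] at hp
    simp [erase_insert hp.2.1.2]
  · rintro ⟨I, v⟩ hp
    simp [insert_erase (mem_sigma.mp hp).2]

theorem sum_sum_powersetCard_erase_insert (T : Finset α) (m : ℕ) (F : Finset α → β) :
    ∑ v ∈ T, ∑ I ∈ (T.erase v).powersetCard m, F (insert v I) =
      (m + 1) • ∑ J ∈ T.powersetCard (m + 1), F J := by
  rw [← sum_powersetCard_succ_sum_eq_sum_insert, smul_sum]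
  refine sum_congr rfl fun J hJ => ?_
  rw [sum_const, (mem_powersetCard.mp hJ).2]

theorem sum_powersetCard_succ_sum (T : Finset α) (m : ℕ) (f : α → β) :
    ∑ I ∈ T.powersetCard (m + 1), ∑ v ∈ I, f v = (#T - 1).choose m • ∑ v ∈ T, f v := by
  rw [sum_powersetCard_succ_sum_eq_sum_insert, smul_sum]
  refine sum_congr rfl fun v hv => ?_
  rw [sum_const, card_powersetCard, card_erase_of_mem hv]

end Finset

theorem Nat.mul_choose_sub_one {k r : ℕ} (hr : 1 ≤ r) :
    k * (k - 1).choose (r - 1) = r * k.choose r := by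
  obtain ⟨s, rfl⟩ := Nat.exists_eq_add_of_le' hr
  rcases k with _ | k
  · simp
  · simpa [mul_comm] using Nat.add_one_mul_choose_eq k s

namespace SDPFeasible

variable {V H : Type} [DecidableEq V] [NormedAddCommGroup H] [InnerProductSpace ℝ H]
  {r : ℕ} {E : Finset (Finset V)} {x : Finset V → H}

theorem inner_singleton_eq_norm_sq_insert (hx : SDPFeasible r E x) {u : V} {I : Finset V}
    (hu : u ∉ I) (hI : I.Nonempty) (hcard : #I ≤ r) :
    ⟪x {u}, x I⟫ = ‖x (insert u I)‖ ^ 2 := by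
  rw [insert_eq]
  exact hx.2.2.1 {u} I (singleton_nonempty u) hI
    (by rw [← insert_eq, card_insert_of_notMem hu]; omega)

theorem card_mul_inner_le_sum_inner_singleton (hx : SDPFeasible r E x) (u : V)
    {I : Finset V} (hcard : #I ≤ r + 1) :
    (#I : ℝ) * ⟪x {u}, x I⟫ ≤ ∑ v ∈ I, ⟪x {u}, x {v}⟫ := by
  rw [← nsmul_eq_mul]
  exact card_nsmul_le_sum _ _ _ fun v hv =>
    hx.2.2.2.1 u {v} I (singleton_nonempty v) (singleton_subset_iff.mpr hv) hcard

theorem sum_sum_inner_powersetCard_erase (hx : SDPFeasible r E x) (hr : 2 ≤ r)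
    (S : Finset V) :
    ∑ u ∈ S, ∑ I ∈ (S.erase u).powersetCard (r - 1), ⟪x {u}, x I⟫ =
      r * ∑ I ∈ S.powersetCard r, ‖x I‖ ^ 2 := by
  obtain ⟨m, rfl⟩ : ∃ m, r = m + 1 := ⟨r - 1, by omega⟩
  rw [Nat.add_sub_cancel, ← nsmul_eq_mul, ← sum_sum_powersetCard_erase_insert]
  refine sum_congr rfl fun u _ => sum_congr rfl fun I hI => ?_
  rw [mem_powersetCard, subset_erase] at hI
  exact hx.inner_singleton_eq_norm_sq_insert hI.1.2 (card_pos.mp (by omega)) (by omega)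

theorem succ_mul_sum_inner_powersetCard_le (hx : SDPFeasible r E x) (u : V)
    (T : Finset V) {m : ℕ} (hm : m ≤ r) :
    (m + 1 : ℝ) * ∑ I ∈ T.powersetCard (m + 1), ⟪x {u}, x I⟫ ≤
      (#T - 1).choose m * ∑ v ∈ T, ⟪x {u}, x {v}⟫ := by
  rw [← nsmul_eq_mul, ← sum_powersetCard_succ_sum, mul_sum]
  refine sum_le_sum fun I hI => ?_
  have hIc := (mem_powersetCard.mp hI).2
  simpa [hIc] using hx.card_mul_inner_le_sum_inner_singleton u (hIc.trans_le (by omega))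

theorem exists_mem_mul_sum_norm_sq_le (hx : SDPFeasible r E x) (hr : 2 ≤ r) {S : Finset V}
    (hS : S.Nonempty) :
    ∃ u ∈ S, (r : ℝ) * ∑ I ∈ S.powersetCard r, ‖x I‖ ^ 2 ≤
      #S * ∑ I ∈ (S.erase u).powersetCard (r - 1), ⟪x {u}, x I⟫ := by
  refine exists_le_of_sum_le hS (le_of_eq ?_)
  rw [sum_const, ← mul_sum, hx.sum_sum_inner_powersetCard_erase hr, nsmul_eq_mul]

end SDPFeasible

theorem one_div_mul_le_one_div_mul {a b c d p q : ℝ} (hc : 0 < c) (hd : 0 < d) (hp : 0 < p)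
    (h : p * a ≤ q * b) (hcd : q * c = p * d) : 1 / d * a ≤ 1 / c * b := by
  rw [one_div_mul_eq_div, one_div_mul_eq_div, div_le_div_iff₀ hd hc]
  refine le_of_mul_le_mul_left ?_ hp
  calc p * (a * c) = p * a * c := by ring
    _ ≤ q * b * c := by gcongr
    _ = b * d * p := by linear_combination b * hcd
    _ = p * (b * d) := by ring

theorem stmt_5_general {V : Type} [DecidableEq V]
    {H : Type} [NormedAddCommGroup H] [InnerProductSpace ℝ H]
    (r k : ℕ) (hr : 2 ≤ r)
    (E : Finset (Finset V))
    (x : Finset V → H) (hx : SDPFeasible r E x)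
    (S : Finset V) (hScard : S.card = k) (hkr : r ≤ k) :
    (∃ u ∈ S,
      (1 / ((k.choose r : ℝ))) * ∑ I ∈ S.powersetCard r, ‖x I‖ ^ 2 ≤
        (1 / (((k - 1).choose (r - 1) : ℕ) : ℝ)) *
          ∑ I ∈ (S.erase u).powersetCard (r - 1), ⟪x {u}, x I⟫) ∧
    (∃ u ∈ S,
      (1 / ((k.choose r : ℝ))) * ∑ I ∈ S.powersetCard r, ‖x I‖ ^ 2 ≤
        (1 / ((k : ℝ) - 1)) * ∑ v ∈ S.erase u, ⟪x {u}, x {v}⟫) := by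
  obtain ⟨u, huS, hu⟩ := hx.exists_mem_mul_sum_norm_sq_le hr (S := S) (card_pos.mp (by omega))
  rw [hScard] at hu
  have part_a : 1 / (k.choose r : ℝ) * ∑ I ∈ S.powersetCard r, ‖x I‖ ^ 2 ≤
      1 / ((k - 1).choose (r - 1) : ℕ) *
        ∑ I ∈ (S.erase u).powersetCard (r - 1), ⟪x {u}, x I⟫ :=
    one_div_mul_le_one_div_mul (by exact_mod_cast Nat.choose_pos (by omega))
      (by exact_mod_cast Nat.choose_pos hkr) (by positivity) hu
      (by exact_mod_cast Nat.mul_choose_sub_one (by omega))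
  refine ⟨⟨u, huS, part_a⟩, u, huS, part_a.trans ?_⟩
  have h_link := hx.succ_mul_sum_inner_powersetCard_le u (S.erase u) (m := r - 2) (by omega)
  rw [show r - 2 + 1 = r - 1 by omega, card_erase_of_mem huS, hScard] at h_link
  have hchoose := Nat.mul_choose_sub_one (k := k - 1) (r := r - 1) (by omega)
  rw [show r - 1 - 1 = r - 2 by omega] at hchoose
  have hk : (1 : ℝ) < k := by exact_mod_cast (by omega : 1 < k)
  refine one_div_mul_le_one_div_mul (by linarith) (by exact_mod_cast Nat.choose_pos (by omega))
    (by positivity) h_link ?_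
  have hchoose_real := congrArg (Nat.cast (R := ℝ)) hchoose
  push_cast [Nat.cast_sub (by omega : 1 ≤ k), Nat.cast_sub (by omega : 1 ≤ r), Nat.cast_sub hr]
    at hchoose_real ⊢
  linarith

theorem stmt_5 {V : Type} [Fintype V] [DecidableEq V]
    {H : Type} [NormedAddCommGroup H] [InnerProductSpace ℝ H]
    (r k : ℕ) (hr : 2 ≤ r)
    (E : Finset (Finset V)) (hE : ∀ e ∈ E, e.card = r)
    (x : Finset V → H) (hx : SDPFeasible r E x)
    (S : Finset V) (hScard : S.card = k) (hkr : r ≤ k) :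
    (∃ u ∈ S,
      (1 / ((k.choose r : ℝ))) * ∑ I ∈ S.powersetCard r, ‖x I‖ ^ 2 ≤
        (1 / (((k - 1).choose (r - 1) : ℕ) : ℝ)) *
          ∑ I ∈ (S.erase u).powersetCard (r - 1), ⟪x {u}, x I⟫) ∧
    (∃ u ∈ S,
      (1 / ((k.choose r : ℝ))) * ∑ I ∈ S.powersetCard r, ‖x I‖ ^ 2 ≤
        (1 / ((k : ℝ) - 1)) * ∑ v ∈ S.erase u, ⟪x {u}, x {v}⟫) :=
  stmt_5_general r k hr E x hx S hScard hkr
end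

section
/- Let x be a feasible SDP solution for H = (V,E) and let u ∈ V. If v₁, …, v_r are r pairwise distinct vertices of V, all distinct from u, with ⟨x_u, x_{v_i}⟩ ≥ 1 − 1/(2r) for every i ∈ [r], then ‖x_{{v₁,…,v_r}}‖² ≥ 1/2; in particular {v₁,…,v_r} ∉ E. Consequently the set {v ∈ V∖{u} : ⟨x_u, x_v⟩ ≥ 1 − 1/(2r)} is an independent set of H. -/
open Finset
open scoped RealInnerProductSpace Classical
/-
Since `⟪x_u, x_{v_i}⟫ = ‖x_{{u, v_i}}‖²`, each term of the sum in constraint (5) is at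
most `1/(2r)`, so `‖x_T‖² ≥ 1/2` for `T = {u, v₁, …, v_r}`. For `S = {v₁, …, v_r} ⊆ T` we have
`⟪x_S, x_T⟫ = ‖x_T‖²`, and Cauchy–Schwarz turns this into `‖x_T‖ ≤ ‖x_S‖`. Hence
`‖x_S‖² ≥ 1/2 > 0 = ‖x_e‖²` for every hyperedge `e`, so `S` is not a hyperedge; applying this to
an enumeration of a hyperedge inside the given set shows that set is independent.
-/

theorem norm_le_of_inner_eq_norm_sq {H : Type} [NormedAddCommGroup H] [InnerProductSpace ℝ H]
    {a b : H} (h : ⟪a, b⟫ = ‖b‖ ^ 2) : ‖b‖ ≤ ‖a‖ := by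
  rcases (norm_nonneg b).eq_or_lt with hb | hb
  · rw [← hb]
    exact norm_nonneg a
  · have : ‖b‖ * ‖b‖ ≤ ‖a‖ * ‖b‖ := by
      rw [← sq, ← h]
      exact real_inner_le_norm a b
    exact le_of_mul_le_mul_right this hb

theorem Finset.exists_injective_fin_image_univ_eq {V : Type} [DecidableEq V] {r : ℕ}
    {e : Finset V} (he : e.card = r) :
    ∃ w : Fin r → V, Function.Injective w ∧ univ.image w = e := by
  let g : Fin r ≃ e := (finCongr he.symm).trans e.equivFin.symm
  refine ⟨Subtype.val ∘ g, Subtype.val_injective.comp g.injective, ?_⟩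
  rw [← image_image (f := g) (g := Subtype.val), image_univ_equiv, univ_eq_attach,
    attach_image_val]

namespace SDPFeasible

variable {V : Type} [DecidableEq V] {H : Type} [NormedAddCommGroup H] [InnerProductSpace ℝ H]
  {r : ℕ} {E : Finset (Finset V)} {x : Finset V → H}

theorem norm_sq_le_of_subset (hx : SDPFeasible r E x) {S T : Finset V} (hS : S.Nonempty)
    (hST : S ⊆ T) (hT : T.card ≤ r + 1) : ‖x T‖ ^ 2 ≤ ‖x S‖ ^ 2 := by
  have hunion : S ∪ T = T := union_eq_right.mpr hST
  have hinner := hx.2.2.1 S T hS (hS.mono hST) (by rwa [hunion])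
  rw [hunion] at hinner
  exact pow_le_pow_left₀ (norm_nonneg _) (norm_le_of_inner_eq_norm_sq hinner) 2

theorem inner_singleton_eq_norm_sq_pair (hx : SDPFeasible r E x) (hr : 1 ≤ r) (u w : V) :
    ⟪x {u}, x {w}⟫ = ‖x {u, w}‖ ^ 2 := by
  have hcard : (({u} : Finset V) ∪ {w}).card ≤ r + 1 :=
    (card_union_le _ _).trans (by simp only [card_singleton]; omega)
  rw [hx.2.2.1 {u} {w} (singleton_nonempty u) (singleton_nonempty w) hcard, ← insert_eq]

theorem one_sub_norm_sq_insert_le_s7 (hx : SDPFeasible r E x) (hr : 1 ≤ r) {u : V} {v : Fin r → V}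
    (hv : Function.Injective v) (hvu : ∀ i, v i ≠ u) {ε : ℝ}
    (hproj : ∀ i, 1 - ε ≤ ⟪x {u}, x {v i}⟫) :
    1 - ‖x (insert u (univ.image v))‖ ^ 2 ≤ r * ε :=
  calc 1 - ‖x (insert u (univ.image v))‖ ^ 2
      ≤ ∑ i : Fin r, (1 - ‖x {u, v i}‖ ^ 2) := hx.2.2.2.2 u v hv hvu
    _ ≤ ∑ _i : Fin r, ε := sum_le_sum fun i _ => by
        have := hproj i
        rw [hx.inner_singleton_eq_norm_sq_pair hr] at this
        linarith
    _ = r * ε := by simp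

theorem half_le_norm_sq_image (hx : SDPFeasible r E x) (hr : 1 ≤ r) {u : V} {v : Fin r → V}
    (hv : Function.Injective v) (hvu : ∀ i, v i ≠ u)
    (hproj : ∀ i, 1 - 1 / (2 * r) ≤ ⟪x {u}, x {v i}⟫) :
    1 / 2 ≤ ‖x (univ.image v)‖ ^ 2 := by
  have hT : 1 / 2 ≤ ‖x (insert u (univ.image v))‖ ^ 2 := by
    have h := hx.one_sub_norm_sq_insert_le_s7 hr hv hvu hproj
    have hr' : (r : ℝ) ≠ 0 := by positivity
    rw [mul_one_div, div_mul_cancel_right₀ hr'] at h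
    linarith
  have hS : (univ.image v).Nonempty := univ_nonempty_iff.mpr ⟨⟨0, hr⟩⟩ |>.image v
  have hcard : (insert u (univ.image v)).card ≤ r + 1 :=
    (card_insert_le _ _).trans (by simpa using card_image_le (s := univ) (f := v))
  exact hT.trans (hx.norm_sq_le_of_subset hS (subset_insert u _) hcard)

theorem not_mem_of_half_le_norm_sq (hx : SDPFeasible r E x) {S : Finset V}
    (hS : 1 / 2 ≤ ‖x S‖ ^ 2) : S ∉ E := fun hSE => by
  have := hx.2.1 S hSE
  linarith

end SDPFeasible

theorem stmt_7_general {V : Type} [Fintype V] [DecidableEq V]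
    {H : Type} [NormedAddCommGroup H] [InnerProductSpace ℝ H]
    (r : ℕ) (hr : 2 ≤ r)
    (E : Finset (Finset V)) (hE : ∀ e ∈ E, e.card = r)
    (x : Finset V → H) (hx : SDPFeasible r E x)
    (u : V) (v : Fin r → V) (hv : Function.Injective v) (hvu : ∀ i, v i ≠ u)
    (hproj : ∀ i, 1 - 1 / (2 * r) ≤ ⟪x {u}, x {v i}⟫) :
    1 / 2 ≤ ‖x (Finset.image v Finset.univ)‖ ^ 2 ∧
    Finset.image v Finset.univ ∉ E ∧
    ∀ e ∈ E,
      ¬ e ⊆ Finset.univ.filter (fun w => w ≠ u ∧ 1 - 1 / (2 * r) ≤ ⟪x {u}, x {w}⟫) := by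
  have hr1 : 1 ≤ r := by omega
  have hhalf := hx.half_le_norm_sq_image hr1 hv hvu hproj
  refine ⟨hhalf, hx.not_mem_of_half_le_norm_sq hhalf, fun e heE hsub => ?_⟩
  obtain ⟨w, hw, rfl⟩ := exists_injective_fin_image_univ_eq (hE e heE)
  have hclose : ∀ i, w i ≠ u ∧ 1 - 1 / (2 * r) ≤ ⟪x {u}, x {w i}⟫ := fun i =>
    (mem_filter.mp (hsub (mem_image_of_mem w (mem_univ i)))).2
  exact hx.not_mem_of_half_le_norm_sq
    (hx.half_le_norm_sq_image hr1 hw (fun i => (hclose i).1) (fun i => (hclose i).2)) heE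

theorem stmt_7 {V : Type} [Fintype V] [DecidableEq V]
    {H : Type} [NormedAddCommGroup H] [InnerProductSpace ℝ H]
    (r : ℕ) (hr : 2 ≤ r) (hn : r + 1 ≤ Fintype.card V)
    (E : Finset (Finset V)) (hE : ∀ e ∈ E, e.card = r)
    (x : Finset V → H) (hx : SDPFeasible r E x)
    (u : V) (v : Fin r → V) (hv : Function.Injective v) (hvu : ∀ i, v i ≠ u)
    (hproj : ∀ i, 1 - 1 / (2 * r) ≤ ⟪x {u}, x {v i}⟫) :
    1 / 2 ≤ ‖x (Finset.image v Finset.univ)‖ ^ 2 ∧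
    Finset.image v Finset.univ ∉ E ∧
    ∀ e ∈ E,
      ¬ e ⊆ Finset.univ.filter (fun w => w ≠ u ∧ 1 - 1 / (2 * r) ≤ ⟪x {u}, x {w}⟫) :=
  stmt_7_general r hr E hE x hx u v hv hvu hproj
end

section
/- Let r ≥ 2, k ≥ r, p ∈ (0,1], and ε ∈ (0,1). Then μ_p of the set of ω ∈ Ω such that some vertex v ∈ V∖S satisfies #{J ∈ C(S, r−1) : {v} ∪ J ∈ R(ω)} ≤ (1−ε)·p·C(k−1, r−1) is at most n·exp(−ε²·p·k^{r−1}/(2·(r−1)^{r−1})). Here C(S,r−1) is the set of (r−1)-element subsets of S and C(k−1,r−1) the binomial coefficient. -/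
open Finset
open scoped RealInnerProductSpace Classical
/-- Product Bernoulli(p) probability of an event `A ⊆ {0,1}^α`. -/
noncomputable def bernoulliProb {α : Type} [Fintype α] [DecidableEq α]
    (p : ℝ) (A : Set (α → Bool)) : ℝ :=
  ∑ ω : α → Bool, Set.indicator A (fun ω => ∏ a : α, if ω a then p else 1 - p) ω

/-!
For a fixed `v ∉ S` the count in the event is the number of open coordinates among the
`C(k, r-1)` edges `{v} ∪ J`, `J ⊆ S`, a binomial variable with mean `p C(k, r-1)`. The
multiplicative Chernoff bound `P(X ≤ (1-ε) E X) ≤ exp(-ε² E X / 2)` together with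
`C(k, r-1) ≥ (k / (r-1))^(r-1)` bounds the probability for each `v`, and a union bound over
the at most `n` vertices outside `S` finishes the proof.
-/

theorem Nat.pow_le_pow_mul_choose {n m : ℕ} (h : m ≤ n) : n ^ m ≤ m ^ m * n.choose m := by
  have hfactor : ∀ i ∈ range m, n * (m - i) ≤ m * (n - i) := fun i _ => by
    have : m * i ≤ n * i := Nat.mul_le_mul_right i h
    rw [Nat.mul_sub, Nat.mul_sub, Nat.mul_comm m n]
    omega
  have hdesc : n ^ m * m.factorial ≤ m ^ m * n.descFactorial m :=
    calc n ^ m * m.factorial = ∏ i ∈ range m, n * (m - i) := by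
          rw [prod_mul_distrib, prod_const, card_range, ← Nat.descFactorial_eq_prod_range,
            Nat.descFactorial_self]
      _ ≤ ∏ i ∈ range m, m * (n - i) := prod_le_prod' hfactor
      _ = m ^ m * n.descFactorial m := by
          rw [prod_mul_distrib, prod_const, card_range, Nat.descFactorial_eq_prod_range]
  rw [Nat.descFactorial_eq_factorial_mul_choose, Nat.mul_left_comm, Nat.mul_comm (n ^ m)] at hdesc
  exact Nat.le_of_mul_le_mul_left hdesc m.factorial_pos

theorem Real.exp_neg_le_one_sub_add_sq_div_two {s : ℝ} (hs : 0 ≤ s) :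
    Real.exp (-s) ≤ 1 - s + s ^ 2 / 2 := by
  let f : ℝ → ℝ := fun x => 1 - x + x ^ 2 / 2 - Real.exp (-x)
  have hf : ∀ x, HasDerivAt f (x - 1 + Real.exp (-x)) x := fun x => by
    refine ((((hasDerivAt_id x).const_sub 1).add ((hasDerivAt_pow 2 x).div_const 2)).sub
      (hasDerivAt_neg x).exp).congr_deriv ?_
    simp only [Nat.cast_ofNat]
    ring
  have hmono : MonotoneOn f (Set.Ici 0) :=
    monotoneOn_of_hasDerivWithinAt_nonneg (convex_Ici 0)
      (fun x _ => (hf x).continuousAt.continuousWithinAt) (fun x _ => (hf x).hasDerivWithinAt)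
      fun x _ => by linarith [Real.add_one_le_exp (-x)]
  have key : f 0 ≤ f s := hmono Set.self_mem_Ici hs hs
  simp only [f, neg_zero, Real.exp_zero] at key
  linarith

theorem Real.exp_mul_mul_one_sub_add_mul_exp_neg_pow_le {p ε t : ℝ} {m : ℕ} (hp0 : 0 ≤ p)
    (hp1 : p ≤ 1) (hε : 0 ≤ ε) (ht : t ≤ (1 - ε) * p * m) :
    Real.exp (ε * t) * (1 - p + p * Real.exp (-ε)) ^ m ≤ Real.exp (-(ε ^ 2 * p * m / 2)) := by
  have hbase : 1 - p + p * Real.exp (-ε) ≤ Real.exp (-(p * (ε - ε ^ 2 / 2))) := by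
    nlinarith [Real.exp_neg_le_one_sub_add_sq_div_two hε,
      Real.add_one_le_exp (-(p * (ε - ε ^ 2 / 2)))]
  have hbase0 : 0 ≤ 1 - p + p * Real.exp (-ε) := by nlinarith [Real.exp_pos (-ε)]
  calc Real.exp (ε * t) * (1 - p + p * Real.exp (-ε)) ^ m
      ≤ Real.exp (ε * t) * Real.exp (-(p * (ε - ε ^ 2 / 2))) ^ m := by gcongr
    _ = Real.exp (ε * t - p * (ε - ε ^ 2 / 2) * m) := by
        rw [← Real.exp_nat_mul, ← Real.exp_add]; ring_nf
    _ ≤ Real.exp (-(ε ^ 2 * p * m / 2)) := by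
        gcongr
        nlinarith [mul_le_mul_of_nonneg_left ht hε]

section Bernoulli

variable {α : Type} [Fintype α]

noncomputable def bernoulliWeight (p : ℝ) (ω : α → Bool) : ℝ := ∏ a, if ω a then p else 1 - p

theorem bernoulliWeight_nonneg {p : ℝ} (hp0 : 0 ≤ p) (hp1 : p ≤ 1) (ω : α → Bool) :
    0 ≤ bernoulliWeight p ω :=
  prod_nonneg fun a _ => by split <;> linarith

theorem sum_bernoulliWeight_mul_pow_card_filter [DecidableEq α] (p x : ℝ) (F : Finset α) :
    ∑ ω, bernoulliWeight p ω * x ^ #(F.filter fun a => ω a = true) =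
      (1 - p + p * x) ^ #F := by
  let g : α → Bool → ℝ := fun a b => (if b then p else 1 - p) * if a ∈ F ∧ b then x else 1
  have hpow : ∀ ω : α → Bool,
      x ^ #(F.filter fun a => ω a = true) = ∏ a, if a ∈ F ∧ ω a = true then x else 1 := by
    intro ω
    rw [prod_ite, prod_const, prod_const_one, mul_one, filter_and, filter_univ_mem,
      inter_filter, inter_univ]
  have hcoord : ∀ a, ∑ b, g a b = if a ∈ F then 1 - p + p * x else 1 := by
    intro a
    by_cases ha : a ∈ F
    · simp only [g, Fintype.sum_bool, ha, true_and, ↓reduceIte, Bool.false_eq_true]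
      ring
    · simp [g, ha]
  calc ∑ ω, bernoulliWeight p ω * x ^ #(F.filter fun a => ω a = true)
      = ∑ ω : α → Bool, ∏ a, g a (ω a) := by
        simp only [bernoulliWeight, hpow, g, prod_mul_distrib]
    _ = ∏ a, ∑ b, g a b := (Fintype.prod_sum (κ := fun _ => Bool) g).symm
    _ = (1 - p + p * x) ^ #F := by
        rw [Fintype.prod_congr _ _ hcoord, Fintype.prod_ite_mem, prod_const]

variable [DecidableEq α] {p : ℝ}

theorem bernoulliProb_eq (A : Set (α → Bool)) :
    bernoulliProb p A = ∑ ω, A.indicator (bernoulliWeight p) ω := rfl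

theorem bernoulliProb_le_sum {ι : Type} (hp0 : 0 ≤ p) (hp1 : p ≤ 1) {E : Set (α → Bool)}
    (T : Finset ι) (A : ι → Set (α → Bool)) (hE : E ⊆ ⋃ i ∈ T, A i) :
    bernoulliProb p E ≤ ∑ i ∈ T, bernoulliProb p (A i) := by
  have hw := bernoulliWeight_nonneg (α := α) hp0 hp1
  simp only [bernoulliProb_eq]
  rw [sum_comm]
  refine sum_le_sum fun ω _ => ?_
  by_cases hω : ω ∈ E
  · obtain ⟨i, hi, hωi⟩ := Set.mem_iUnion₂.1 (hE hω)
    rw [Set.indicator_of_mem hω, ← Set.indicator_of_mem hωi (bernoulliWeight p)]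
    exact single_le_sum (fun j _ => Set.indicator_nonneg (fun ω _ => hw ω) ω) hi
  · rw [Set.indicator_of_notMem hω]
    exact sum_nonneg fun j _ => Set.indicator_nonneg (fun ω _ => hw ω) ω

theorem bernoulliProb_card_filter_le_exp_mul (hp0 : 0 ≤ p) (hp1 : p ≤ 1) {s : ℝ} (hs : 0 ≤ s)
    (F : Finset α) (t : ℝ) :
    bernoulliProb p {ω | (#(F.filter fun a => ω a = true) : ℝ) ≤ t} ≤
      Real.exp (s * t) * (1 - p + p * Real.exp (-s)) ^ #F := by
  -- Markov's inequality for `exp (-s X)`: on `X ≤ t` we have `1 ≤ exp (s t) * exp (-s) ^ X`.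
  rw [← sum_bernoulliWeight_mul_pow_card_filter, mul_sum, bernoulliProb_eq]
  refine sum_le_sum fun ω _ => ?_
  set c : ℕ := #(F.filter fun a => ω a = true)
  have hw := bernoulliWeight_nonneg hp0 hp1 ω
  by_cases hω : (c : ℝ) ≤ t
  · rw [Set.indicator_of_mem (by exact hω), ← Real.exp_nat_mul, mul_left_comm,
      ← Real.exp_add]
    refine le_mul_of_one_le_right hw (Real.one_le_exp ?_)
    nlinarith
  · rw [Set.indicator_of_notMem (by exact hω)]
    positivity

theorem bernoulliProb_card_filter_le_exp (hp0 : 0 ≤ p) (hp1 : p ≤ 1) {ε : ℝ} (hε : 0 ≤ ε)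
    (F : Finset α) {t : ℝ} (ht : t ≤ (1 - ε) * p * #F) :
    bernoulliProb p {ω | (#(F.filter fun a => ω a = true) : ℝ) ≤ t} ≤
      Real.exp (-(ε ^ 2 * p * #F / 2)) :=
  (bernoulliProb_card_filter_le_exp_mul hp0 hp1 hε F t).trans
    (Real.exp_mul_mul_one_sub_add_mul_exp_neg_pow_le hp0 hp1 hε ht)

end Bernoulli

section Star

variable {V : Type} [Fintype V] [DecidableEq V] {r : ℕ} {S : Finset V} {v : V}

def boundaryStar (r : ℕ) (S : Finset V) (v : V) : Finset {e // e ∈ boundary r S} :=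
  univ.filter fun e => v ∈ e.1 ∧ e.1.erase v ⊆ S

theorem insert_mem_boundary (hr : 2 ≤ r) (hv : v ∉ S) {J : Finset V}
    (hJ : J ∈ S.powersetCard (r - 1)) : insert v J ∈ boundary r S := by
  obtain ⟨hJS, hJcard⟩ := mem_powersetCard.1 hJ
  obtain ⟨x, hx⟩ := card_pos.1 (by omega : 0 < #J)
  refine mem_filter.2 ⟨mem_powersetCard.2 ⟨subset_univ _, ?_⟩, ⟨x, ?_⟩, ⟨v, ?_⟩⟩
  · rw [card_insert_of_notMem fun h => hv (hJS h)]
    omega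
  · exact mem_inter.2 ⟨mem_insert_of_mem hx, hJS hx⟩
  · exact mem_sdiff.2 ⟨mem_insert_self v J, hv⟩

theorem card_filter_boundaryStar (hr : 2 ≤ r) (hv : v ∉ S) (P : Finset V → Prop)
    [DecidablePred P] :
    #((boundaryStar r S v).filter fun e => P e.1) =
      #((S.powersetCard (r - 1)).filter fun J => P (insert v J)) := by
  refine card_bij (fun e _ => e.1.erase v) ?_ ?_ ?_
  · intro e he
    simp only [boundaryStar, mem_filter, mem_univ, true_and] at he
    obtain ⟨⟨hve, hS⟩, hP⟩ := he
    have hcard : #e.1 = r := (mem_powersetCard.1 (mem_filter.1 e.2).1).2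
    refine mem_filter.2 ⟨mem_powersetCard.2 ⟨hS, ?_⟩, by rwa [insert_erase hve]⟩
    rw [card_erase_of_mem hve, hcard]
  · intro e₁ he₁ e₂ he₂ h
    simp only [boundaryStar, mem_filter] at he₁ he₂
    exact Subtype.ext (by rw [← insert_erase he₁.1.2.1, ← insert_erase he₂.1.2.1, h])
  · intro J hJ
    obtain ⟨hJ, hP⟩ := mem_filter.1 hJ
    have hvJ : v ∉ J := fun h => hv ((mem_powersetCard.1 hJ).1 h)
    refine ⟨⟨insert v J, insert_mem_boundary hr hv hJ⟩, ?_, erase_insert hvJ⟩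
    simp only [boundaryStar, mem_filter, mem_univ, true_and, mem_insert_self,
      erase_insert hvJ]
    exact ⟨(mem_powersetCard.1 hJ).1, hP⟩

theorem card_boundaryStar (hr : 2 ≤ r) (hv : v ∉ S) :
    #(boundaryStar r S v) = (#S).choose (r - 1) := by
  simpa using card_filter_boundaryStar hr hv fun _ => True

theorem card_filter_insert_mem_image_eq (hr : 2 ≤ r) (hv : v ∉ S)
    (ω : {e // e ∈ boundary r S} → Bool) :
    #((S.powersetCard (r - 1)).filter fun J =>
        insert v J ∈ ((boundary r S).attach.filter fun e => ω e = true).image Subtype.val) =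
      #((boundaryStar r S v).filter fun e => ω e = true) := by
  rw [← card_filter_boundaryStar hr hv
    (· ∈ ((boundary r S).attach.filter fun e => ω e = true).image Subtype.val)]
  congr 1
  refine filter_congr fun e _ => ?_
  simp

end Star

theorem stmt_11 (r n k : ℕ) (p ε : ℝ) (hr : 2 ≤ r) (hkr : r ≤ k)
    (hp0 : 0 < p) (hp1 : p ≤ 1) (hε0 : 0 < ε) (hε1 : ε < 1)
    (S : Finset (Fin n)) (hScard : S.card = k) :
    bernoulliProb p
      {ω : {e : Finset (Fin n) // e ∈ boundary r S} → Bool |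
        ∃ v ∈ Sᶜ,
          ((((S.powersetCard (r - 1)).filter (fun J =>
              insert v J ∈ Finset.image Subtype.val
                ((boundary r S).attach.filter (fun e => ω e = true)))).card : ℝ)) ≤
            (1 - ε) * p * (((k - 1).choose (r - 1) : ℕ) : ℝ)} ≤
      (n : ℝ) *
        Real.exp (-(ε ^ 2 * p * (k : ℝ) ^ (r - 1) / (2 * ((r : ℝ) - 1) ^ (r - 1)))) := by
  set B := Real.exp (-(ε ^ 2 * p * (k : ℝ) ^ (r - 1) / (2 * ((r : ℝ) - 1) ^ (r - 1))))
  set t := (1 - ε) * p * (((k - 1).choose (r - 1) : ℕ) : ℝ)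
  have hstar : ∀ v ∈ Sᶜ,
      bernoulliProb p {ω | (#((boundaryStar r S v).filter fun e => ω e = true) : ℝ) ≤ t} ≤ B := by
    intro v hv
    have hcard := card_boundaryStar hr (mem_compl.1 hv)
    rw [hScard] at hcard
    have ht : t ≤ (1 - ε) * p * #(boundaryStar r S v) := by
      rw [hcard]
      exact mul_le_mul_of_nonneg_left (mod_cast Nat.choose_le_choose _ (Nat.sub_le k 1))
        (by nlinarith)
    refine (bernoulliProb_card_filter_le_exp hp0.le hp1 hε0.le _ ht).trans ?_
    have hchoose : ((k : ℝ) ^ (r - 1)) ≤ ((r : ℝ) - 1) ^ (r - 1) * k.choose (r - 1) := by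
      rw [← Nat.cast_pred (by omega)]
      exact_mod_cast Nat.pow_le_pow_mul_choose (by omega : r - 1 ≤ k)
    have hr1 : (0 : ℝ) < ((r : ℝ) - 1) ^ (r - 1) := by
      have : (2 : ℝ) ≤ r := by exact_mod_cast hr
      exact pow_pos (by linarith) _
    rw [hcard, Real.exp_le_exp, neg_le_neg_iff, div_le_div_iff₀ (by positivity) (by positivity)]
    nlinarith [mul_le_mul_of_nonneg_left hchoose (by positivity : 0 ≤ ε ^ 2 * p)]
  calc _ ≤ ∑ v ∈ Sᶜ,
        bernoulliProb p {ω | (#((boundaryStar r S v).filter fun e => ω e = true) : ℝ) ≤ t} := by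
        refine bernoulliProb_le_sum hp0.le hp1 _ _ fun ω ⟨v, hv, hω⟩ => Set.mem_biUnion hv ?_
        rwa [card_filter_insert_mem_image_eq hr (mem_compl.1 hv)] at hω
    _ ≤ ∑ _v ∈ Sᶜ, B := sum_le_sum hstar
    _ ≤ n * B := by
        rw [sum_const, nsmul_eq_mul]
        gcongr
        simpa using card_le_univ Sᶜ
end

section
/- Let x be a feasible SDP solution for H = (V,E) and let S ⊆ V with |S| = k ≥ r. Then Σ_{u ∈ S} Σ_{I ∈ C(S∖{u}, r−1)} ⟨x_u, x_I⟩ ≤ (C(k−2, r−2)/(r−1)) · Σ_{u ∈ S} Σ_{v ∈ S∖{u}} ⟨x_u, x_v⟩, where C(T,i) denotes the set of i-element subsets of T and C(k−2,r−2) the binomial coefficient. -/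
open Finset
open scoped RealInnerProductSpace Classical
/-!
By monotonicity (constraint (4)), `⟪x_u, x_I⟫ ≤ ⟪x_u, x_v⟫` for every `v ∈ I`, so averaging over
the `r - 1` elements of `I` gives `(r - 1) ⟪x_u, x_I⟫ ≤ ∑_{v ∈ I} ⟪x_u, x_v⟫`. Summing over the
`(r - 1)`-subsets `I` of `S ∖ {u}` and double counting, each `v ∈ S ∖ {u}` lies in exactly
`C(k - 2, r - 2)` of them.
-/

namespace Finset

variable {α M : Type*} [DecidableEq α] [AddCommMonoid M]

lemma card_filter_mem_powersetCard_succ (T : Finset α) (n : ℕ) {v : α} (hv : v ∈ T) :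
    #{I ∈ T.powersetCard (n + 1) | v ∈ I} = (#T - 1).choose n := by
  simpa [singleton_subset_iff] using
    card_filter_powersetCard_subset {v} T (n + 1) (singleton_subset_iff.2 hv) (by simp)

lemma sum_powersetCard_sum_eq_choose_smul (T : Finset α) (n : ℕ) (f : α → M) :
    ∑ I ∈ T.powersetCard (n + 1), ∑ v ∈ I, f v = (#T - 1).choose n • ∑ v ∈ T, f v := by
  rw [sum_comm' (t' := T) (s' := fun v ↦ {I ∈ T.powersetCard (n + 1) | v ∈ I}), smul_sum]
  · exact sum_congr rfl fun v hv ↦ by rw [sum_const, card_filter_mem_powersetCard_succ T n hv]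
  · intro I v
    simp only [mem_powersetCard, mem_filter]
    exact ⟨fun ⟨⟨hIT, hI⟩, hv⟩ ↦ ⟨⟨⟨hIT, hI⟩, hv⟩, hIT hv⟩,
      fun ⟨⟨⟨hIT, hI⟩, hv⟩, _⟩ ↦ ⟨⟨hIT, hI⟩, hv⟩⟩

end Finset

namespace SDPFeasible

variable {V H : Type} [DecidableEq V] [NormedAddCommGroup H] [InnerProductSpace ℝ H]
  {r : ℕ} {E : Finset (Finset V)} {x : Finset V → H}

lemma inner_le_inner_singleton (hx : SDPFeasible r E x) (u : V) {I : Finset V} {v : V}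
    (hv : v ∈ I) (hI : #I ≤ r + 1) : ⟪x {u}, x I⟫ ≤ ⟪x {u}, x {v}⟫ :=
  hx.2.2.2.1 u {v} I (singleton_nonempty v) (singleton_subset_iff.2 hv) hI

lemma card_mul_inner_le_sum (hx : SDPFeasible r E x) (u : V) {I : Finset V}
    (hI : #I ≤ r + 1) : #I * ⟪x {u}, x I⟫ ≤ ∑ v ∈ I, ⟪x {u}, x {v}⟫ := by
  simpa using sum_le_sum fun v hv ↦ hx.inner_le_inner_singleton u hv hI

lemma mul_sum_inner_powersetCard_le (hx : SDPFeasible r E x) (u : V) (T : Finset V) {n : ℕ}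
    (hn : n ≤ r) :
    ((n + 1 : ℕ) : ℝ) * ∑ I ∈ T.powersetCard (n + 1), ⟪x {u}, x I⟫ ≤
      (#T - 1).choose n * ∑ v ∈ T, ⟪x {u}, x {v}⟫ := by
  rw [← nsmul_eq_mul ((#T - 1).choose n), ← sum_powersetCard_sum_eq_choose_smul, mul_sum]
  refine sum_le_sum fun I hI ↦ ?_
  have hIcard := (mem_powersetCard.1 hI).2
  simpa only [hIcard] using hx.card_mul_inner_le_sum u (I := I) (by omega)

end SDPFeasible

theorem stmt_14_general {V : Type} [DecidableEq V]
    {H : Type} [NormedAddCommGroup H] [InnerProductSpace ℝ H]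
    (r k : ℕ) (hr : 2 ≤ r)
    (E : Finset (Finset V))
    (x : Finset V → H) (hx : SDPFeasible r E x)
    (S : Finset V) (hScard : S.card = k) :
    ∑ u ∈ S, ∑ I ∈ (S.erase u).powersetCard (r - 1), ⟪x {u}, x I⟫ ≤
      ((((k - 2).choose (r - 2) : ℕ) : ℝ) / ((r : ℝ) - 1)) *
        ∑ u ∈ S, ∑ v ∈ S.erase u, ⟪x {u}, x {v}⟫ := by
  have hr1 : (0 : ℝ) < (r : ℝ) - 1 := by
    have : (2 : ℝ) ≤ r := by exact_mod_cast hr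
    linarith
  have per_vertex : ∀ u ∈ S,
      ((r : ℝ) - 1) * ∑ I ∈ (S.erase u).powersetCard (r - 1), ⟪x {u}, x I⟫ ≤
        (k - 2).choose (r - 2) * ∑ v ∈ S.erase u, ⟪x {u}, x {v}⟫ := by
    intro u hu
    have hT : #(S.erase u) - 1 = k - 2 := by rw [card_erase_of_mem hu, hScard]; omega
    have := hx.mul_sum_inner_powersetCard_le u (S.erase u) (n := r - 2) (by omega)
    rwa [show r - 2 + 1 = r - 1 by omega, hT, Nat.cast_sub (by omega : 1 ≤ r),
      Nat.cast_one] at this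
  rw [div_mul_eq_mul_div, le_div_iff₀ hr1, mul_comm _ ((r : ℝ) - 1), mul_sum, mul_sum]
  exact sum_le_sum per_vertex

theorem stmt_14 {V : Type} [Fintype V] [DecidableEq V]
    {H : Type} [NormedAddCommGroup H] [InnerProductSpace ℝ H]
    (r k : ℕ) (hr : 2 ≤ r)
    (E : Finset (Finset V)) (hE : ∀ e ∈ E, e.card = r)
    (x : Finset V → H) (hx : SDPFeasible r E x)
    (S : Finset V) (hScard : S.card = k) (hkr : r ≤ k) :
    ∑ u ∈ S, ∑ I ∈ (S.erase u).powersetCard (r - 1), ⟪x {u}, x I⟫ ≤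
      ((((k - 2).choose (r - 2) : ℕ) : ℝ) / ((r : ℝ) - 1)) *
        ∑ u ∈ S, ∑ v ∈ S.erase u, ⟪x {u}, x {v}⟫ :=
  stmt_14_general r k hr E x hx S hScard
end

section
/- Let r, n, k be integers with r ≥ 2, k ≥ 1, and n ≥ k+1. Then Σ_{i=1}^{r−1} C(k, i)·C(n−k, r−i) ≤ (4e)^{r−2}·k·n^{r−1}/r^{r−2}, where C(m,i) denotes the binomial coefficient and e is Euler's number. -/
/-!
The sum counts the `r`-subsets of an `n`-set that meet a fixed `k`-subset, so it is at most
`k * C(n, r - 1) ≤ k * n ^ (r - 1) / (r - 1)!`. It remains to see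
`r ^ (r - 2) ≤ (4e) ^ (r - 2) * (r - 1)!`, which follows from the exponential series bound
`(r - 1) ^ (r - 1) ≤ e ^ (r - 1) * (r - 1)!` together with `r ≤ 2 (r - 1)`.
-/

open Finset Nat

theorem Nat.choose_add_le_choose_add_mul (m k r : ℕ) :
    (m + k).choose (r + 1) ≤ m.choose (r + 1) + k * (m + k).choose r := by
  induction k with
  | zero => simp
  | succ k ih =>
    have hmono : (m + k).choose r ≤ (m + k + 1).choose r := choose_le_choose r (by omega)
    have hmono_mul := Nat.mul_le_mul_left k hmono
    rw [← add_assoc, choose_succ_succ', add_one_mul]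
    omega

theorem Nat.sum_Icc_choose_mul_choose_le (k m r : ℕ) :
    ∑ i ∈ Icc 1 r, k.choose i * m.choose (r - i) ≤ k * (m + k).choose (r - 1) := by
  cases r with
  | zero => simp
  | succ r =>
    have hvandermonde : (m + k).choose (r + 1) =
        m.choose (r + 1) + ∑ i ∈ Icc 1 (r + 1), k.choose i * m.choose (r + 1 - i) := by
      rw [add_comm m, add_choose_eq, Finset.Nat.sum_antidiagonal_eq_sum_range_succ
        (fun i j => k.choose i * m.choose j), range_succ_eq_Icc_zero,
        ← insert_Icc_add_one_left_eq_Icc (Nat.zero_le _), sum_insert (by simp)]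
      simp
    have hbound := choose_add_le_choose_add_mul m k r
    simp only [add_tsub_cancel_right]
    omega

theorem add_two_pow_le_four_mul_exp_pow_mul_factorial (m : ℕ) :
    ((m : ℝ) + 2) ^ m ≤ (4 * Real.exp 1) ^ m * (m + 1)! := by
  rcases Nat.eq_zero_or_pos m with rfl | hm
  · simp
  have hexp : ((m : ℝ) + 1) ^ (m + 1) ≤ Real.exp 1 ^ (m + 1) * (m + 1)! := by
    have := Real.pow_div_factorial_le_exp ((m + 1 : ℕ) : ℝ) (by positivity) (m + 1)
    rw [div_le_iff₀ (by positivity), ← Real.exp_one_pow] at this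
    exact_mod_cast this
  have he : Real.exp 1 ≤ 2 ^ m * (m + 1) := by
    have h1 : (1 : ℝ) ≤ m := by exact_mod_cast hm
    have h2 : (2 : ℝ) ≤ 2 ^ m := by simpa using pow_le_pow_right₀ (by norm_num : (1 : ℝ) ≤ 2) hm
    nlinarith [Real.exp_one_lt_d9]
  refine le_of_mul_le_mul_right ?_ (by positivity : (0 : ℝ) < m + 1)
  calc ((m : ℝ) + 2) ^ m * (m + 1) ≤ (2 * (m + 1)) ^ m * (m + 1) := by gcongr; linarith
    _ = 2 ^ m * ((m : ℝ) + 1) ^ (m + 1) := by rw [mul_pow]; ring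
    _ ≤ 2 ^ m * (Real.exp 1 ^ (m + 1) * (m + 1)!) := by gcongr
    _ = 2 ^ m * Real.exp 1 ^ m * (m + 1)! * Real.exp 1 := by ring
    _ ≤ 2 ^ m * Real.exp 1 ^ m * (m + 1)! * (2 ^ m * (m + 1)) := by gcongr
    _ = (4 * Real.exp 1) ^ m * (m + 1)! * (m + 1) := by
      rw [mul_pow, show (4 : ℝ) = 2 ^ 2 by norm_num, ← pow_mul]; ring

theorem stmt_18_general (r n k : ℕ) (hr : 2 ≤ r) (hn : k + 1 ≤ n) :
    ∑ i ∈ Finset.Icc 1 (r - 1), ((k.choose i : ℕ) : ℝ) * (((n - k).choose (r - i) : ℕ) : ℝ) ≤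
      (4 * Real.exp 1) ^ (r - 2) * (k : ℝ) * (n : ℝ) ^ (r - 1) / (r : ℝ) ^ (r - 2) := by
  obtain ⟨m, rfl⟩ : ∃ m, r = m + 2 := ⟨r - 2, by omega⟩
  have hcount : ∑ i ∈ Icc 1 (m + 1), k.choose i * (n - k).choose (m + 2 - i) ≤
      k * n.choose (m + 1) := by
    calc ∑ i ∈ Icc 1 (m + 1), k.choose i * (n - k).choose (m + 2 - i)
        ≤ ∑ i ∈ Icc 1 (m + 2), k.choose i * (n - k).choose (m + 2 - i) :=
          sum_le_sum_of_subset (Icc_subset_Icc_right (by omega))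
      _ ≤ k * (n - k + k).choose (m + 1) := sum_Icc_choose_mul_choose_le k (n - k) (m + 2)
      _ = k * n.choose (m + 1) := by rw [Nat.sub_add_cancel (by omega)]
  have hfactorial := add_two_pow_le_four_mul_exp_pow_mul_factorial m
  simp only [add_tsub_cancel_right, show m + 2 - 1 = m + 1 by omega]
  calc ∑ i ∈ Icc 1 (m + 1), ((k.choose i : ℕ) : ℝ) * (((n - k).choose (m + 2 - i) : ℕ) : ℝ)
      ≤ k * (n.choose (m + 1) : ℝ) := by exact_mod_cast hcount
    _ ≤ k * ((n : ℝ) ^ (m + 1) / (m + 1)!) := by gcongr; exact choose_le_pow_div _ _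
    _ ≤ (4 * Real.exp 1) ^ m * k * (n : ℝ) ^ (m + 1) / ((m + 2 : ℕ) : ℝ) ^ m := by
      rw [mul_div_assoc', div_le_div_iff₀ (by positivity) (by positivity)]
      push_cast
      calc k * (n : ℝ) ^ (m + 1) * ((m : ℝ) + 2) ^ m
          ≤ k * (n : ℝ) ^ (m + 1) * ((4 * Real.exp 1) ^ m * (m + 1)!) := by gcongr
        _ = _ := by ring

theorem stmt_18 (r n k : ℕ) (hr : 2 ≤ r) (hk : 1 ≤ k) (hn : k + 1 ≤ n) :
    ∑ i ∈ Finset.Icc 1 (r - 1), ((k.choose i : ℕ) : ℝ) * (((n - k).choose (r - i) : ℕ) : ℝ) ≤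
      (4 * Real.exp 1) ^ (r - 2) * (k : ℝ) * (n : ℝ) ^ (r - 1) / (r : ℝ) ^ (r - 2) :=
  stmt_18_general r n k hr hn
end
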